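/- arXiv:2508.21392 — 2 statements merged into one kernel-verified Lean document; each statement's English description precedes it below -/
import Mathlib

section
/- Under the hyperbolic gnomonic projection h from H^d to the open unit ball of R^d, the pushforward of the hyperbolic volume measure is the measure with density ψ(x) = (1 − ‖x‖²)^{−(d+1)/2} with respect to Lebesgue measure on the open unit ball. -/
open Metric Set MeasureTheory
noncomputable section

/-- The hyperboloid model of hyperbolic `d`-space. -/
def Hyp (d : ℕ) : Set (EuclideanSpace ℝ (Fin (d + 1))) :=
  {x | ∑ i : Fin d, x i.castSucc ^ 2 - x (Fin.last d) ^ 2 = -1 ∧ 0 < x (Fin.last d)}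

/-- The vertical chart of the hyperboloid: `y ↦ (y, √(1+‖y‖²))`. -/
def hypChart (d : ℕ) (y : EuclideanSpace ℝ (Fin d)) : EuclideanSpace ℝ (Fin (d + 1)) :=
  WithLp.toLp 2 (fun i => Fin.lastCases (Real.sqrt (1 + ‖y‖ ^ 2)) (fun j => y j) i)

/-- The Riemannian volume measure of `H^d` in the hyperboloid model: in the vertical chart
`y ↦ (y, √(1+‖y‖²))` its density with respect to Lebesgue measure is `(1+‖y‖²)^{-1/2}`. -/
def hypVol (d : ℕ) : Measure (EuclideanSpace ℝ (Fin (d + 1))) :=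
  Measure.map (hypChart d)
    ((volume : Measure (EuclideanSpace ℝ (Fin d))).withDensity
      fun y => ENNReal.ofReal ((1 + ‖y‖ ^ 2) ^ (-(1 : ℝ) / 2)))

/-- The hyperbolic gnomonic projection `h(x) = (x_1/x_{d+1}, …, x_d/x_{d+1})`. -/
def hproj (d : ℕ) (x : EuclideanSpace ℝ (Fin (d + 1))) : EuclideanSpace ℝ (Fin d) :=
  WithLp.toLp 2 (fun i => x i.castSucc / x (Fin.last d))

/-!
In the vertical chart, the gnomonic projection becomes the radial map
`y ↦ (1 + ‖y‖²)^{-1/2} y` of `ℝ^d` onto the unit ball (`OpenPartialHomeomorph.univUnitBall`).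
Its differential is `(1 + ‖y‖²)^{-1/2} (id - (1 + ‖y‖²)⁻¹ y ⊗ y)`, a scalar times a rank-one
perturbation of the identity, so its Jacobian is `(1 + ‖y‖²)^{-(d+2)/2}`. Since
`1 - ‖x‖² = (1 + ‖y‖²)⁻¹` at the image point `x`, the change of variables formula turns the chart
density `(1 + ‖y‖²)^{-1/2}` into `(1 - ‖x‖²)^{-(d+1)/2}`.
-/

open Module

theorem LinearMap.det_id_add_smulRight {R M : Type*} [CommRing R] [AddCommGroup M] [Module R M]
    [Module.Free R M] [Module.Finite R M] (f : M →ₗ[R] R) (v : M) :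
    (LinearMap.id + f.smulRight v).det = 1 + f v := by
  classical
  let b := Free.chooseBasis R M
  have hM : LinearMap.toMatrix b b (LinearMap.id + f.smulRight v) =
      1 + Matrix.replicateCol (Fin 1) (b.repr v) *
        Matrix.replicateRow (Fin 1) (fun j => f (b j)) := by
    ext i j
    simp [LinearMap.toMatrix_apply, Matrix.one_apply, Matrix.mul_apply, Finsupp.single_apply,
      mul_comm, eq_comm]
  rw [← LinearMap.det_toMatrix b, hM]
  refine (Matrix.det_one_add_replicateCol_mul_replicateRow _ _).trans ?_
  conv_rhs => rw [← b.sum_repr v]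
  simp only [map_sum, map_smul, smul_eq_mul, dotProduct, mul_comm]

namespace OpenPartialHomeomorph

variable {E : Type*} [NormedAddCommGroup E] [InnerProductSpace ℝ E]

theorem one_sub_norm_univUnitBall_sq (y : E) :
    1 - ‖univUnitBall y‖ ^ 2 = (1 + ‖y‖ ^ 2)⁻¹ := by
  have ht : 0 < 1 + ‖y‖ ^ 2 := by positivity
  rw [univUnitBall_apply, norm_smul, mul_pow, norm_inv, Real.norm_of_nonneg (Real.sqrt_nonneg _),
    inv_pow, Real.sq_sqrt ht.le]
  field_simp
  ring

theorem hasFDerivAt_univUnitBall (y : E) :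
    HasFDerivAt univUnitBall
      ((√(1 + ‖y‖ ^ 2))⁻¹ • (ContinuousLinearMap.id ℝ E -
        (1 + ‖y‖ ^ 2)⁻¹ • (innerSL ℝ y).smulRight y)) y := by
  have ht : 0 < 1 + ‖y‖ ^ 2 := by positivity
  have hs : 0 < √(1 + ‖y‖ ^ 2) := Real.sqrt_pos.2 ht
  have hnorm : HasFDerivAt (fun y : E => 1 + ‖y‖ ^ 2) (2 • innerSL ℝ y) y := by
    simpa using ((hasFDerivAt_id y).norm_sq).const_add 1
  have hinv := (hasDerivAt_inv hs.ne').comp_hasFDerivAt y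
    ((Real.hasDerivAt_sqrt ht.ne').comp_hasFDerivAt y hnorm)
  refine (hinv.smul (hasFDerivAt_id y)).congr_fderiv ?_
  ext v
  simp [ContinuousLinearMap.smulRight_apply, smul_smul, Real.sq_sqrt ht.le, sub_eq_add_neg]
  ring_nf

theorem det_fderiv_univUnitBall [FiniteDimensional ℝ E] (y : E) :
    (fderiv ℝ univUnitBall y).det = (1 + ‖y‖ ^ 2) ^ (-((finrank ℝ E : ℝ) + 2) / 2) := by
  have ht : 0 < 1 + ‖y‖ ^ 2 := by positivity
  have hlin : ((fderiv ℝ univUnitBall y : E →L[ℝ] E) : E →ₗ[ℝ] E) =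
      (√(1 + ‖y‖ ^ 2))⁻¹ • (LinearMap.id + (-(1 + ‖y‖ ^ 2)⁻¹ • innerₛₗ ℝ y).smulRight y) := by
    rw [(hasFDerivAt_univUnitBall y).fderiv]
    ext v
    simp [sub_eq_add_neg, smul_smul, mul_assoc]
  rw [ContinuousLinearMap.det, hlin, LinearMap.det_smul, LinearMap.det_id_add_smulRight]
  have hrank_one : 1 + (-(1 + ‖y‖ ^ 2)⁻¹ • innerₛₗ ℝ y) y = (1 + ‖y‖ ^ 2)⁻¹ := by
    simp only [LinearMap.smul_apply, innerₛₗ_apply_apply, real_inner_self_eq_norm_sq, smul_eq_mul]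
    field_simp
    ring
  rw [hrank_one, Real.sqrt_eq_rpow, ← Real.rpow_neg ht.le, ← Real.rpow_natCast,
    ← Real.rpow_mul ht.le, ← Real.rpow_neg_one, ← Real.rpow_add ht]
  ring_nf

theorem map_univUnitBall_withDensity [FiniteDimensional ℝ E] [MeasurableSpace E] [BorelSpace E]
    (μ : Measure E) [μ.IsAddHaarMeasure] :
    Measure.map univUnitBall
        (μ.withDensity fun y => ENNReal.ofReal ((1 + ‖y‖ ^ 2) ^ (-(1 : ℝ) / 2))) =
      (μ.restrict (ball 0 1)).withDensity
        fun x => ENNReal.ofReal ((1 - ‖x‖ ^ 2) ^ (-((finrank ℝ E : ℝ) + 1) / 2)) := by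
  have hmeas : Measurable (univUnitBall : E → E) :=
    (contDiff_univUnitBall (n := 0)).continuous.measurable
  have hrange : range (univUnitBall : E → E) = ball 0 1 := by
    rw [← image_univ, ← univUnitBall_source, image_source_eq_target, univUnitBall_target]
  have hdensity (y : E) : ENNReal.ofReal |(fderiv ℝ univUnitBall y).det| *
      ENNReal.ofReal ((1 - ‖univUnitBall y‖ ^ 2) ^ (-((finrank ℝ E : ℝ) + 1) / 2)) =
      ENNReal.ofReal ((1 + ‖y‖ ^ 2) ^ (-(1 : ℝ) / 2)) := by
    have ht : 0 < 1 + ‖y‖ ^ 2 := by positivity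
    rw [det_fderiv_univUnitBall, one_sub_norm_univUnitBall_sq,
      abs_of_pos (Real.rpow_pos_of_pos ht _), ← ENNReal.ofReal_mul (Real.rpow_pos_of_pos ht _).le,
      Real.inv_rpow ht.le, ← Real.rpow_neg ht.le, ← Real.rpow_add ht]
    ring_nf
  ext A hA
  rw [Measure.map_apply hmeas hA, withDensity_apply _ (hmeas hA), withDensity_apply _ hA,
    Measure.restrict_restrict hA, ← hrange, ← image_preimage_eq_inter_range,
    lintegral_image_eq_lintegral_abs_det_fderiv_mul μ (hmeas hA)
      (fun y _ => (hasFDerivAt_univUnitBall y).differentiableAt.hasFDerivAt.hasFDerivWithinAt)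
      (univUnitBall.injOn.mono (by simp [univUnitBall_source]))]
  simp_rw [hdensity]

end OpenPartialHomeomorph

open OpenPartialHomeomorph in
theorem hproj_comp_hypChart (d : ℕ) : hproj d ∘ hypChart d = univUnitBall := by
  ext y i
  simp [hproj, hypChart, univUnitBall_apply, div_eq_inv_mul]

theorem measurable_hproj (d : ℕ) : Measurable (hproj d) := by
  unfold hproj; fun_prop

theorem measurable_hypChart (d : ℕ) : Measurable (hypChart d) := by
  unfold hypChart
  refine (WithLp.measurable_toLp 2 _).comp (measurable_pi_lambda _ fun i => ?_)
  induction i using Fin.lastCases <;>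
    simp only [Fin.lastCases_last, Fin.lastCases_castSucc] <;> fun_prop

/-- Under the hyperbolic gnomonic projection, the pushforward of the hyperbolic volume
measure is the measure with density `ψ(x) = (1 − ‖x‖²)^{−(d+1)/2}` with respect to Lebesgue
measure on the open unit ball. -/
theorem hyperbolic_gnomonic_pushforward (d : ℕ) :
    Measure.map (hproj d) (hypVol d) =
      ((volume : Measure (EuclideanSpace ℝ (Fin d))).restrict
          (ball (0 : EuclideanSpace ℝ (Fin d)) 1)).withDensity
        (fun y => ENNReal.ofReal ((1 - ‖y‖ ^ 2) ^ (-((d : ℝ) + 1) / 2))) := by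
  rw [hypVol, Measure.map_map (measurable_hproj d) (measurable_hypChart d), hproj_comp_hypChart,
    OpenPartialHomeomorph.map_univUnitBall_withDensity, finrank_euclideanSpace_fin]
end
end

section
/- Let x be a point in the interior of the convex hull of points y_1, …, y_n in R^d (or in a convex body of S^d contained in an open hemisphere). Partition a neighborhood of x by the 2^d closed orthants of a coordinate system centered at x. If every one of the 2^d orthants contains at least one of the points y_i, then x lies in the convex hull of the chosen 2^d points; contrapositively, if x is not in the convex hull of y_1,…,y_n, then at least one orthant relative to x contains no y_i. -/
open Set
noncomputable section

/-- The closed orthant at `x` with sign pattern `ε` (`true` encoding `+1`, `false`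
encoding `−1`): `{y : ε_j (y − x)_j ≥ 0 for all j}`. -/
def orthant {d : ℕ} (x : EuclideanSpace ℝ (Fin d)) (ε : Fin d → Bool) :
    Set (EuclideanSpace ℝ (Fin d)) :=
  {y | ∀ j : Fin d, if ε j then x j ≤ y j else y j ≤ x j}

/-! A closed convex set missing `x` is separated from `x` by a linear functional `f`, and the
orthant at `x` whose signs are opposite to those of the coefficients of `f` lies in the
half-space `{f ≤ f x}`, hence misses the set. Applied to the convex hull of the chosen points
`y (p ε)`, this orthant would contain none of them, contradicting the choice of `p`. -/

lemma linearMap_apply_eq_sum_single {ι : Type*} [Fintype ι] [DecidableEq ι]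
    (f : EuclideanSpace ℝ ι →ₗ[ℝ] ℝ) (w : EuclideanSpace ℝ ι) :
    f w = ∑ j, w j * f (EuclideanSpace.single j 1) := by
  conv_lhs => rw [← (EuclideanSpace.basisFun ι ℝ).sum_repr w]
  simp [map_sum]

lemma map_le_of_mem_orthant {d : ℕ} (f : EuclideanSpace ℝ (Fin d) →ₗ[ℝ] ℝ)
    {x z : EuclideanSpace ℝ (Fin d)}
    (hz : z ∈ orthant x fun j => decide (f (EuclideanSpace.single j 1) ≤ 0)) :
    f z ≤ f x := by
  have hterm (j : Fin d) : (z - x) j * f (EuclideanSpace.single j 1) ≤ 0 := by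
    have hzj := hz j
    by_cases hf : f (EuclideanSpace.single j 1) ≤ 0
    · simp only [hf, decide_true, if_true] at hzj
      exact mul_nonpos_of_nonneg_of_nonpos (by simpa using hzj) hf
    · simp only [hf, decide_false, Bool.false_eq_true, if_false] at hzj
      exact mul_nonpos_of_nonpos_of_nonneg (by simpa using hzj) (le_of_not_ge hf)
  have hsub : f z - f x ≤ 0 := by
    rw [← map_sub, linearMap_apply_eq_sum_single]
    exact Finset.sum_nonpos fun j _ => hterm j
  linarith

lemma exists_orthant_disjoint_of_notMem {d : ℕ} {x : EuclideanSpace ℝ (Fin d)}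
    {s : Set (EuclideanSpace ℝ (Fin d))} (hconv : Convex ℝ s) (hclosed : IsClosed s)
    (hx : x ∉ s) : ∃ ε : Fin d → Bool, Disjoint (orthant x ε) s := by
  obtain ⟨f, u, hfx, hfs⟩ := geometric_hahn_banach_point_closed hconv hclosed hx
  refine ⟨fun j => decide (f (EuclideanSpace.single j 1) ≤ 0),
    Set.disjoint_left.mpr fun z hz hzs => ?_⟩
  have hfz : f z ≤ f x := map_le_of_mem_orthant f.toLinearMap hz
  linarith [hfs z hzs]

lemma exists_orthant_forall_notMem_of_notMem_convexHull {d : ℕ} {ι : Type*} [Finite ι]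
    {x : EuclideanSpace ℝ (Fin d)} {y : ι → EuclideanSpace ℝ (Fin d)}
    (hx : x ∉ convexHull ℝ (Set.range y)) : ∃ ε : Fin d → Bool, ∀ i, y i ∉ orthant x ε := by
  obtain ⟨ε, hε⟩ := exists_orthant_disjoint_of_notMem (convex_convexHull ℝ _)
    ((Set.finite_range y).isClosed_convexHull ℝ) hx
  exact ⟨ε, fun i hi => hε.notMem_of_mem_left hi (subset_convexHull ℝ _ ⟨i, rfl⟩)⟩

/-- If `x` lies in the interior of the convex hull of `y_1,…,y_n` and each of the `2^d`
orthants at `x` contains a chosen point `y_{p(ε)}`, then `x` lies in the convex hull of the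
`2^d` chosen points; contrapositively, if `x` is not in the convex hull of `y_1,…,y_n`,
then some orthant at `x` contains none of the `y_i`. -/
theorem orthant_pigeonhole (d n : ℕ) (x : EuclideanSpace ℝ (Fin d))
    (y : Fin n → EuclideanSpace ℝ (Fin d)) :
    ((x ∈ interior (convexHull ℝ (Set.range y))) →
      ∀ p : (Fin d → Bool) → Fin n, (∀ ε, y (p ε) ∈ orthant x ε) →
        x ∈ convexHull ℝ (Set.range (y ∘ p))) ∧
    (x ∉ convexHull ℝ (Set.range y) → ∃ ε : Fin d → Bool, ∀ i, y i ∉ orthant x ε) := by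
  refine ⟨fun _ p hp => ?_, exists_orthant_forall_notMem_of_notMem_convexHull⟩
  by_contra hx
  obtain ⟨ε, hε⟩ := exists_orthant_forall_notMem_of_notMem_convexHull hx
  exact hε ε (hp ε)
end
end
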